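/- Fix three distinct symbols k,l,m and let n, n', n̂, n̂' be real-valued functions on ordered pairs of distinct symbols. Assume the station relations: for every ordered pair (x,y) of distinct symbols, n(x,y) + n̂(x,y) = n(y,x) + n̂(y,x), and the same with n,n̂ replaced by n',n̂'. Then the sum over the three cyclic permutations (k,l,m)→(l,m,k)→(m,k,l) of [−n(k,l)n'(k,m) + n(k,m)n'(k,l) − n̂(k,m)n̂'(k,l) + n̂(k,l)n̂'(k,m)] plus the sum over the same cyclic permutations of [n(k,l)n'(l,k) − n(l,k)n'(k,l) − n̂(k,l)n̂'(l,k) + n̂(l,k)n̂'(k,l)] equals the sum over the same cyclic permutations of [(n(k,l)+n(k,m))(n'(l,k)+n'(l,m)) − (n'(k,l)+n'(k,m))(n(l,k)+n(l,m))] plus the sum over the same cyclic permutations of [(n̂(k,l)+n̂(k,m))(n̂'(m,k)+n̂'(m,l)) − (n̂'(k,l)+n̂'(k,m))(n̂(m,k)+n̂(m,l))]. -/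
import Mathlib

/-- The algebraic content of Proposition "finalprop": matching the station
contributions of the intersection number with those of the symplectic form,
for a single pair of glued hexagonal faces with labels `k,l,m`. -/
theorem hexagon_station_identity {α : Type*} (k l m : α)
    (hkl : k ≠ l) (hlm : l ≠ m) (hkm : k ≠ m)
    (n n' nh nh' : α → α → ℝ)
    (hst : ∀ x y : α, x ≠ y → n x y + nh x y = n y x + nh y x)
    (hst' : ∀ x y : α, x ≠ y → n' x y + nh' x y = n' y x + nh' y x) :
    ((-(n k l * n' k m) + n k m * n' k l - nh k m * nh' k l + nh k l * nh' k m) +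
     (-(n l m * n' l k) + n l k * n' l m - nh l k * nh' l m + nh l m * nh' l k) +
     (-(n m k * n' m l) + n m l * n' m k - nh m l * nh' m k + nh m k * nh' m l)) +
    ((n k l * n' l k - n l k * n' k l - nh k l * nh' l k + nh l k * nh' k l) +
     (n l m * n' m l - n m l * n' l m - nh l m * nh' m l + nh m l * nh' l m) +
     (n m k * n' k m - n k m * n' m k - nh m k * nh' k m + nh k m * nh' m k)) =
    (((n k l + n k m) * (n' l k + n' l m) - (n' k l + n' k m) * (n l k + n l m)) +
     ((n l m + n l k) * (n' m l + n' m k) - (n' l m + n' l k) * (n m l + n m k)) +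
     ((n m k + n m l) * (n' k m + n' k l) - (n' m k + n' m l) * (n k m + n k l))) +
    (((nh k l + nh k m) * (nh' m k + nh' m l) - (nh' k l + nh' k m) * (nh m k + nh m l)) +
     ((nh l m + nh l k) * (nh' k l + nh' k m) - (nh' l m + nh' l k) * (nh k l + nh k m)) +
     ((nh m k + nh m l) * (nh' l m + nh' l k) - (nh' m k + nh' m l) * (nh l m + nh l k))) := by
  have e1 : nh l k = n k l + nh k l - n l k := by linarith [hst k l hkl]
  have e2 : nh m l = n l m + nh l m - n m l := by linarith [hst l m hlm]
  have e3 : nh m k = n k m + nh k m - n m k := by linarith [hst k m hkm]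
  have f1 : nh' l k = n' k l + nh' k l - n' l k := by linarith [hst' k l hkl]
  have f2 : nh' m l = n' l m + nh' l m - n' m l := by linarith [hst' l m hlm]
  have f3 : nh' m k = n' k m + nh' k m - n' m k := by linarith [hst' k m hkm]
  rw [e1, e2, e3, f1, f2, f3]
  ring
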